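/- arXiv:1407.2583 — 3 statements merged into one kernel-verified Lean document; each statement's English description precedes it below -/
import Mathlib

section
/- Let p be a prime integer, M̄ a finitely generated module over R̄ = (ℤ/pℤ)[x₁,…,xₙ], and β : M̄ → F^*(M̄) an R̄-linear map. Then ker β₁ ⊆ ker β₂ ⊆ ⋯ is an ascending chain of submodules of M̄ which eventually stabilizes; moreover, if r ≥ 1 satisfies ker β_r = ker β_{r+1}, then ker β_j = ker β_r for every j ≥ r. -/
/-!
Over `𝔽_p[x₁,…,xₙ]` the Frobenius is flat: the ring is free over its subring of `p`-th powers,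
with basis the monomials `x^d`, `0 ≤ dᵢ < p`. Hence `F^*` preserves inclusions of kernels, and
writing `β_{s+1} = F^*(β)_s ∘ β` with `ker F^*(β)_s = ker F^*(β_s)` shows that
`ker β_{s+1} ⊆ ker β_s` propagates to `ker β_{s+2} ⊆ ker β_{s+1}`. Eventual stabilization is
Noetherianity of `M̄`.
-/

/- `R̄ = (ℤ/pℤ)[x₁,…,xₙ]`. -/
open CategoryTheory CategoryTheory.Limits

noncomputable section

abbrev Rbar (p n : ℕ) : Type := MvPolynomial (Fin n) (ZMod p)

/-- The pull-back functor `F^*` : base change along the Frobenius `r ↦ r^p`. -/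
noncomputable def Fstar (A : Type) [CommRing A] (p : ℕ) [Fact p.Prime] [CharP A p] :
    ModuleCat A ⥤ ModuleCat A :=
  ModuleCat.extendScalars (frobenius A p)

/-- The `j`-fold pull-back functor `F^{*j}`; note `F^{*(j+1)}(N) = F^{*j}(F^*(N))`. -/
noncomputable def FstarIter (A : Type) [CommRing A] (p : ℕ) [Fact p.Prime] [CharP A p] :
    ℕ → ModuleCat A ⥤ ModuleCat A
  | 0 => 𝟭 _
  | j + 1 => Fstar A p ⋙ FstarIter A p j

/-- `β_j : M̄ → F^{*j}(M̄)`, defined by `β₀ = id`, `β_{j+1} = F^{*j}(β) ∘ β_j`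
(so `β₁ = β`). -/
noncomputable def betaIter {A : Type} [CommRing A] {p : ℕ} [Fact p.Prime] [CharP A p]
    {M : ModuleCat A} (β : M ⟶ (Fstar A p).obj M) :
    (j : ℕ) → (M ⟶ (FstarIter A p j).obj M)
  | 0 => 𝟙 M
  | j + 1 => betaIter β j ≫ (FstarIter A p j).map β

namespace MvPolynomial

variable {σ R : Type*} [CommRing R] {p : ℕ}

theorem coeff_smul_add_expand_mul_monomial_self (hp : p ≠ 0) (c : MvPolynomial σ R)
    (a d : σ →₀ ℕ) : coeff (p • a + d) (expand p c * monomial d 1) = coeff a c := by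
  rw [coeff_mul_monomial', if_pos le_add_self, mul_one, add_tsub_cancel_right,
    coeff_expand_smul _ hp]

theorem coeff_smul_add_expand_mul_monomial_of_ne (c : MvPolynomial σ R) (a : σ →₀ ℕ)
    {d d₀ : σ →₀ ℕ} (hd : ∀ i, d i < p) (hd₀ : ∀ i, d₀ i < p) (hne : d ≠ d₀) :
    coeff (p • a + d₀) (expand p c * monomial d 1) = 0 := by
  rw [coeff_mul_monomial']
  split_ifs with hle
  · obtain ⟨i, hi⟩ := DFunLike.ne_iff.mp hne
    refine mul_eq_zero_of_left (coeff_expand_of_not_dvd _ (i := i) fun ⟨q, hq⟩ => hi ?_) _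
    have hle_i := hle i
    simp only [Finsupp.coe_tsub, Pi.sub_apply, Finsupp.add_apply, Finsupp.smul_apply,
      smul_eq_mul] at hq hle_i
    -- `p * q + d i = p * a i + d₀ i` with both `d i, d₀ i < p`: compare remainders mod `p`
    have hd_mod : (d i + p * q) % p = d i := by
      rw [Nat.add_mul_mod_self_left, Nat.mod_eq_of_lt (hd i)]
    have hd₀_mod : (d₀ i + p * a i) % p = d₀ i := by
      rw [Nat.add_mul_mod_self_left, Nat.mod_eq_of_lt (hd₀ i)]
    rw [← hd_mod, ← hd₀_mod]
    congr 1
    omega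
  · rfl

theorem eq_zero_of_sum_expand_mul_monomial_eq_zero (hp : p ≠ 0)
    {s : Finset {d : σ →₀ ℕ // ∀ i, d i < p}} {g : {d : σ →₀ ℕ // ∀ i, d i < p} → MvPolynomial σ R}
    (h : ∑ d ∈ s, expand p (g d) * monomial d.1 1 = 0) : ∀ d ∈ s, g d = 0 := by
  intro d₀ hd₀
  ext a
  have hcoeff := congrArg (coeff (p • a + d₀.1)) h
  rwa [coeff_sum, coeff_zero, Finset.sum_eq_single d₀
    (fun d _ hne => coeff_smul_add_expand_mul_monomial_of_ne _ a d.2 d₀.2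
      (Subtype.val_injective.ne hne))
    (fun h => absurd hd₀ h), coeff_smul_add_expand_mul_monomial_self hp] at hcoeff

theorem monomial_eq_expand_mul_monomial (e : σ →₀ ℕ) (c : R) :
    monomial e c = expand p (monomial (e.mapRange (· / p) (Nat.zero_div p)) c) *
      monomial (e.mapRange (· % p) (Nat.zero_mod p)) 1 := by
  rw [expand_monomial, monomial_mul, mul_one]
  congr
  ext i
  simp [Nat.div_add_mod]

theorem flat_expand (hp : p ≠ 0) :
    (expand p : MvPolynomial σ R →ₐ[R] MvPolynomial σ R).toRingHom.Flat := by
  -- `MvPolynomial σ R` with scalars acting through `expand p`: its flatness is `RingHom.Flat`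
  let E := (ModuleCat.restrictScalars (expand p : MvPolynomial σ R →ₐ[R] _).toRingHom).obj
    (ModuleCat.of _ (MvPolynomial σ R))
  let v : {d : σ →₀ ℕ // ∀ i, d i < p} → E := fun d => (monomial d.1 1 : MvPolynomial σ R)
  have hli : LinearIndependent (MvPolynomial σ R) v :=
    linearIndependent_iff'.2 fun _ _ h => eq_zero_of_sum_expand_mul_monomial_eq_zero hp h
  have hspan : ⊤ ≤ Submodule.span (MvPolynomial σ R) (Set.range v) := by
    rintro (x : MvPolynomial σ R) -
    rw [x.as_sum]
    refine Submodule.sum_mem _ fun e _ => ?_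
    rw [monomial_eq_expand_mul_monomial e]
    exact Submodule.smul_mem _ _
      (Submodule.subset_span ⟨⟨_, fun i => Nat.mod_lt _ (Nat.pos_of_ne_zero hp)⟩, rfl⟩)
  have : Module.Free (MvPolynomial σ R) E := Module.Free.of_basis (Module.Basis.mk hli hspan)
  exact (Module.Flat.of_free : Module.Flat (MvPolynomial σ R) E)

theorem flat_frobenius_zmod [Fact p.Prime] : (frobenius (MvPolynomial σ (ZMod p)) p).Flat := by
  rw [show frobenius (MvPolynomial σ (ZMod p)) p = (expand p).toRingHom from
    RingHom.ext frobenius_zmod]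
  exact flat_expand (Fact.out : p.Prime).ne_zero

end MvPolynomial

namespace ModuleCat

variable {R S : Type*} [CommRing R] [CommRing S] {f : R →+* S}

theorem extendScalars_map_apply {N N' : ModuleCat R} (g : N ⟶ N')
    (x : (extendScalars f).obj N) :
    ((extendScalars f).map g).hom x =
      LinearMap.lTensor ((restrictScalars f).obj (of S S)) g.hom x := by
  induction x using TensorProduct.induction_on with
  | zero => exact (map_zero _).trans (map_zero _).symm
  | tmul s m => rfl
  | add x y hx hy =>
    exact (map_add _ _ _).trans ((congrArg₂ (· + ·) hx hy).trans (map_add _ _ _).symm)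

theorem ker_extendScalars_map_le_of_flat (hf : f.Flat) {N N' N'' : ModuleCat R}
    {g : N ⟶ N'} {h : N ⟶ N''} (hgh : LinearMap.ker g.hom ≤ LinearMap.ker h.hom) :
    LinearMap.ker ((extendScalars f).map g).hom ≤ LinearMap.ker ((extendScalars f).map h).hom := by
  have : Module.Flat R ((restrictScalars f).obj (of S S)) := hf
  intro x hx
  rw [LinearMap.mem_ker, extendScalars_map_apply] at hx ⊢
  obtain ⟨y, rfl⟩ : x ∈ LinearMap.range (LinearMap.lTensor _ (LinearMap.ker g.hom).subtype) := by
    rwa [← LinearMap.exact_iff.mp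
      (Module.Flat.lTensor_exact _ (LinearMap.exact_subtype_ker_map g.hom))]
  have hvanish : h.hom ∘ₗ (LinearMap.ker g.hom).subtype = 0 :=
    LinearMap.ext fun z => hgh z.2
  rw [← LinearMap.comp_apply, ← LinearMap.lTensor_comp, hvanish, LinearMap.lTensor_zero]
  rfl

end ModuleCat

section betaIter

variable {A : Type} [CommRing A] {p : ℕ} [Fact p.Prime] [CharP A p]

theorem betaIter_succ_eq_comp {M : ModuleCat A} (β : M ⟶ (Fstar A p).obj M) :
    ∀ s : ℕ, betaIter β (s + 1) = β ≫ betaIter ((Fstar A p).map β) s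
  | 0 => (Category.id_comp β).trans (Category.comp_id β).symm
  | s + 1 => by
    show betaIter β (s + 1) ≫ (FstarIter A p s).map ((Fstar A p).map β) =
      β ≫ betaIter ((Fstar A p).map β) s ≫ (FstarIter A p s).map ((Fstar A p).map β)
    rw [betaIter_succ_eq_comp β s]
    exact Category.assoc _ _ _

theorem ker_betaIter_succ {M : ModuleCat A} (β : M ⟶ (Fstar A p).obj M) (s : ℕ) :
    LinearMap.ker (betaIter β (s + 1)).hom =
      (LinearMap.ker (betaIter ((Fstar A p).map β) s).hom).comap β.hom := by
  rw [betaIter_succ_eq_comp]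
  exact LinearMap.ker_comp _ _

theorem ker_betaIter_fstar_map :
    ∀ (s : ℕ) {M : ModuleCat A} (β : M ⟶ (Fstar A p).obj M),
      LinearMap.ker (betaIter ((Fstar A p).map β) s).hom =
        LinearMap.ker ((Fstar A p).map (betaIter β s)).hom
  | 0, M, β => by
    show LinearMap.ker (𝟙 ((Fstar A p).obj M) : (Fstar A p).obj M ⟶ _).hom =
      LinearMap.ker ((Fstar A p).map (𝟙 M)).hom
    rw [CategoryTheory.Functor.map_id]
  | s + 1, M, β => by
    have hcomp : (Fstar A p).map (betaIter β (s + 1)) =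
        (Fstar A p).map β ≫ (Fstar A p).map (betaIter ((Fstar A p).map β) s) :=
      (congrArg _ (betaIter_succ_eq_comp β s)).trans (Functor.map_comp _ _ _)
    rw [ker_betaIter_succ, ker_betaIter_fstar_map s, hcomp]
    exact (LinearMap.ker_comp _ _).symm

variable {M : ModuleCat A} (β : M ⟶ (Fstar A p).obj M)

theorem ker_betaIter_le_succ (j : ℕ) :
    LinearMap.ker (betaIter β j).hom ≤ LinearMap.ker (betaIter β (j + 1)).hom :=
  LinearMap.ker_le_ker_comp (betaIter β j).hom ((FstarIter A p j).map β).hom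

theorem ker_betaIter_succ_succ_le (hF : (frobenius A p).Flat) {s : ℕ}
    (h : LinearMap.ker (betaIter β (s + 1)).hom ≤ LinearMap.ker (betaIter β s).hom) :
    LinearMap.ker (betaIter β (s + 2)).hom ≤ LinearMap.ker (betaIter β (s + 1)).hom := by
  rw [ker_betaIter_succ β (s + 1), ker_betaIter_succ β s]
  refine Submodule.comap_mono ?_
  rw [ker_betaIter_fstar_map, ker_betaIter_fstar_map]
  exact ModuleCat.ker_extendScalars_map_le_of_flat hF h

theorem ker_betaIter_eq_of_ker_succ_le (hF : (frobenius A p).Flat) {r : ℕ}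
    (h : LinearMap.ker (betaIter β (r + 1)).hom ≤ LinearMap.ker (betaIter β r).hom)
    {j : ℕ} (hj : r ≤ j) :
    LinearMap.ker (betaIter β j).hom = LinearMap.ker (betaIter β r).hom := by
  have hstep : ∀ j, r ≤ j →
      LinearMap.ker (betaIter β (j + 1)).hom ≤ LinearMap.ker (betaIter β j).hom := by
    intro j hj
    induction j, hj using Nat.le_induction with
    | base => exact h
    | succ j _ ih => exact ker_betaIter_succ_succ_le β hF ih
  induction j, hj using Nat.le_induction with
  | base => rfl
  | succ j hrj ih =>
    exact le_antisymm ((hstep j hrj).trans ih.le) (ih.ge.trans (ker_betaIter_le_succ β j))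

theorem exists_forall_ge_ker_betaIter_eq [IsNoetherian A M] :
    ∃ r : ℕ, ∀ j : ℕ, r ≤ j →
      LinearMap.ker (betaIter β j).hom = LinearMap.ker (betaIter β r).hom := by
  obtain ⟨r, hr⟩ := monotone_stabilizes_iff_noetherian.mpr ‹IsNoetherian A M›
    ⟨fun j => LinearMap.ker (betaIter β j).hom, monotone_nat_of_le_succ (ker_betaIter_le_succ β)⟩
  exact ⟨r, fun j hj => (hr j hj).symm⟩

end betaIter

/-- For a prime `p`, a finitely generated module `M̄` over
`R̄ = (ℤ/pℤ)[x₁,…,xₙ]` and an `R̄`-linear map `β : M̄ → F^*(M̄)`, the kernels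
`ker β₁ ⊆ ker β₂ ⊆ ⋯` form an ascending chain of submodules of `M̄` which eventually
stabilizes; moreover if `r ≥ 1` satisfies `ker β_r = ker β_{r+1}`, then
`ker β_j = ker β_r` for every `j ≥ r`. -/
theorem stmt_1 (p n : ℕ) [Fact p.Prime] (M : ModuleCat (Rbar p n))
    [Module.Finite (Rbar p n) M] (β : M ⟶ (Fstar (Rbar p n) p).obj M) :
    (∀ j : ℕ, 1 ≤ j → LinearMap.ker (betaIter β j).hom ≤ LinearMap.ker (betaIter β (j + 1)).hom) ∧
    (∃ r : ℕ, 1 ≤ r ∧ ∀ j : ℕ, r ≤ j →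
      LinearMap.ker (betaIter β j).hom = LinearMap.ker (betaIter β r).hom) ∧
    (∀ r : ℕ, 1 ≤ r →
      LinearMap.ker (betaIter β r).hom = LinearMap.ker (betaIter β (r + 1)).hom →
      ∀ j : ℕ, r ≤ j → LinearMap.ker (betaIter β j).hom = LinearMap.ker (betaIter β r).hom) := by
  obtain ⟨r, hr⟩ := exists_forall_ge_ker_betaIter_eq β
  refine ⟨fun j _ => ker_betaIter_le_succ β j,
    ⟨r + 1, by omega, fun j hj => (hr j (by omega)).trans (hr (r + 1) (by omega)).symm⟩,
    fun r _ h j hj => ker_betaIter_eq_of_ker_succ_le β MvPolynomial.flat_frobenius_zmod h.ge hj⟩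
end
end

section
/- Let M be a finitely generated module over R = ℤ[x₁,…,xₙ]. Then for all but finitely many prime integers p, the following holds: for every associated prime 𝔭 of M, the natural map Γ_𝔭(M)/pΓ_𝔭(M) → M/pM (induced by the inclusion Γ_𝔭(M) ⊆ M followed by reduction modulo p) is injective, and its image equals Γ_{pR+𝔭}(M/pM); in particular Γ_𝔭(M)/pΓ_𝔭(M) ≅ Γ_{pR+𝔭}(M̄). -/
/-!
Put `N = Γ_𝔭(M)` and `Q = M/N`. As `M` is Noetherian, `N` is killed by a fixed power of `𝔭`, so
`Γ_𝔭(Q) = 0`, and by prime avoidance `𝔭` contains an element `f` regular on `Q`. An associated prime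
of a finitely generated module contains at most one prime integer, so all but finitely many `p` are
regular on both `Q` and `Q/fQ`. For such `p`, regularity on `Q` gives `N ∩ pM = pN`, which is the
injectivity, and `f` stays regular on `Q/pQ`. Since `f ∈ pR + 𝔭`, an element of `M/pM` killed by a
power of `pR + 𝔭` then vanishes in `Q/pQ`, that is, it comes from `N`.
-/

noncomputable section

/-- `R = ℤ[x₁,…,xₙ]`. -/
abbrev Rint (n : ℕ) : Type := MvPolynomial (Fin n) ℤ

/-- `Γ_𝔞(N) = {x ∈ N | 𝔞ᵏ x = 0 for some k ≥ 0}`, the `𝔞`-torsion submodule. -/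
def Gamma {A : Type*} [CommRing A] (I : Ideal A) {N : Type*} [AddCommGroup N] [Module A N] :
    Submodule A N where
  carrier := {x | ∃ k : ℕ, ∀ a ∈ I ^ k, a • x = 0}
  zero_mem' := ⟨0, fun a _ => smul_zero a⟩
  add_mem' := by
    rintro x y ⟨k, hk⟩ ⟨l, hl⟩
    refine ⟨k + l, fun a ha => ?_⟩
    rw [smul_add, hk a (Ideal.pow_le_pow_right (Nat.le_add_right k l) ha),
      hl a (Ideal.pow_le_pow_right (Nat.le_add_left l k) ha), add_zero]
  smul_mem' := by
    rintro c x ⟨k, hk⟩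
    exact ⟨k, fun a ha => by rw [smul_comm, hk a ha, smul_zero]⟩

/-- `pN`, the submodule of multiples of `p`. -/
abbrev pSM (n : ℕ) (p : ℕ) (N : Type*) [AddCommGroup N] [Module (Rint n) N] :
    Submodule (Rint n) N :=
  Ideal.span {(p : Rint n)} • (⊤ : Submodule (Rint n) N)

/-- The natural map `Γ_𝔭(M)/pΓ_𝔭(M) → M/pM` induced by the inclusion `Γ_𝔭(M) ⊆ M`
followed by reduction modulo `p`. -/
noncomputable def gammaModP (n p : ℕ) (M : Type*) [AddCommGroup M] [Module (Rint n) M]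
    (𝔭 : Ideal (Rint n)) :
    ((Gamma 𝔭 (N := M)) ⧸ pSM n p (Gamma 𝔭 (N := M))) →ₗ[Rint n] (M ⧸ pSM n p M) :=
  Submodule.mapQ _ _ (Gamma 𝔭 (N := M)).subtype
    (Submodule.map_le_iff_le_comap.mp (by
      rw [Submodule.map_smul'']
      exact smul_mono_right (Ideal.span {(p : Rint n)}) le_top))

open Pointwise Submodule

section Gamma

variable {A : Type*} [CommRing A] {M M' : Type*} [AddCommGroup M] [Module A M]
  [AddCommGroup M'] [Module A M'] {I J : Ideal A}

lemma map_mem_Gamma (g : M →ₗ[A] M') {x : M} (hx : x ∈ Gamma I (N := M)) :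
    g x ∈ Gamma I (N := M') := by
  obtain ⟨k, hk⟩ := hx
  exact ⟨k, fun a ha => by rw [← map_smul, hk a ha, map_zero]⟩

lemma mem_Gamma_sup {x : M} (hI : x ∈ Gamma I (N := M)) (hJ : x ∈ Gamma J (N := M)) :
    x ∈ Gamma (I ⊔ J) (N := M) := by
  obtain ⟨k, hk⟩ := hI
  obtain ⟨l, hl⟩ := hJ
  refine ⟨k + l, fun a ha => ?_⟩
  obtain ⟨b, hb, c, hc, rfl⟩ := mem_sup.mp (Ideal.sup_pow_add_le_pow_sup_pow ha)
  rw [add_smul, hk b hb, hl c hc, add_zero]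

lemma mem_Gamma_span_singleton_of_smul_eq_zero {r : A} {x : M} (h : r • x = 0) :
    x ∈ Gamma (Ideal.span {r}) (N := M) := by
  refine ⟨1, fun a ha => ?_⟩
  obtain ⟨c, rfl⟩ := Ideal.mem_span_singleton'.mp (pow_one (Ideal.span {r}) ▸ ha)
  rw [mul_smul, h, smul_zero]

lemma exists_Gamma_eq_torsionBySet [IsNoetherian A M] (I : Ideal A) :
    ∃ k : ℕ, Gamma I (N := M) = torsionBySet A M ↑(I ^ k) := by
  obtain ⟨k, hk⟩ := monotone_stabilizes_iff_noetherian.mpr inferInstance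
    ⟨fun k => torsionBySet A M ↑(I ^ k), fun i j h => torsionBySet_le_torsionBySet_pow i j h I⟩
  refine ⟨k, le_antisymm (fun x ⟨j, hj⟩ => ?_)
    fun x hx => ⟨k, fun a ha => (mem_torsionBySet_iff _ _).mp hx ⟨a, ha⟩⟩⟩
  have hx : x ∈ torsionBySet A M ↑(I ^ max k j) := (mem_torsionBySet_iff _ _).mpr
    fun a => hj a (Ideal.pow_le_pow_right (le_max_right k j) a.2)
  exact (congrArg (x ∈ ·) (hk (max k j) (le_max_left k j))).mpr hx

lemma Gamma_quotient_Gamma_eq_bot [IsNoetherian A M] (I : Ideal A) :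
    Gamma I (N := M ⧸ Gamma I (N := M)) = ⊥ := by
  obtain ⟨k, hk⟩ := exists_Gamma_eq_torsionBySet (M := M) I
  refine eq_bot_iff.mpr fun x ⟨j, hj⟩ => ?_
  obtain ⟨x, rfl⟩ := mkQ_surjective _ x
  refine (mem_bot A).mpr <| (Quotient.mk_eq_zero _).mpr ⟨k + j, fun a ha => ?_⟩
  rw [pow_add] at ha
  refine Submodule.mul_induction_on ha (fun b hb c hc => ?_)
    fun a a' h h' => by rw [add_smul, h, h', add_zero]
  have hcx : c • x ∈ torsionBySet A M ↑(I ^ k) := by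
    rw [← hk, ← Quotient.mk_eq_zero, Quotient.mk_smul]
    exact hj c hc
  rw [mul_smul]
  exact (mem_torsionBySet_iff _ _).mp hcx ⟨b, hb⟩

lemma exists_mem_isSMulRegular_of_Gamma_eq_bot [IsNoetherianRing A] [Module.Finite A M]
    (h : Gamma I (N := M) = ⊥) : ∃ f ∈ I, IsSMulRegular M f := by
  by_contra! hI
  have hzd : (I : Set A) ⊆ ⋃ P ∈ associatedPrimes A M, (P : Set A) :=
    (biUnion_associatedPrimes_eq_compl_regular A M).symm ▸ hI
  obtain ⟨P, hP, hIP⟩ := (Ideal.subset_union_prime_finite (associatedPrimes.finite A M)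
    (f := id) 0 0 fun P hP _ _ => hP.isPrime).mp hzd
  obtain ⟨hPprime, x, rfl⟩ := isAssociatedPrime_iff.mp hP
  have hx : x ∈ Gamma I (N := M) := ⟨1, fun a ha => mem_colon_singleton.mp (hIP (pow_one I ▸ ha))⟩
  rw [h, mem_bot] at hx
  exact hPprime.ne_top (by simp [hx])

end Gamma

section Regular

variable {A : Type*} [CommRing A] {M : Type*} [AddCommGroup M] [Module A M]

lemma mem_smul_top_iff_exists {r : A} {x : M} : x ∈ r • (⊤ : Submodule A M) ↔ ∃ y, r • y = x := by
  simp [mem_smul_pointwise_iff_exists]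

lemma IsSMulRegular.quotSMulTop_swap {f r : A} (hf : IsSMulRegular M f)
    (hr : IsSMulRegular (QuotSMulTop f M) r) : IsSMulRegular (QuotSMulTop r M) f := by
  refine (isSMulRegular_quotient_iff_mem_of_smul_mem _ _).mpr fun w hw => ?_
  obtain ⟨v, hv⟩ := mem_smul_top_iff_exists.mp hw
  have hvf : v ∈ f • (⊤ : Submodule A M) :=
    mem_of_isSMulRegular_quotient_of_smul_mem hr (hv ▸ mem_smul_top_iff_exists.mpr ⟨w, rfl⟩)
  obtain ⟨t, rfl⟩ := mem_smul_top_iff_exists.mp hvf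
  have hw : w = r • t := hf (hv.symm.trans (smul_comm r f t))
  exact mem_smul_top_iff_exists.mpr ⟨t, hw.symm⟩

lemma setOf_prime_natCast_mem_subsingleton {P : Ideal A} (hP : P ≠ ⊤) :
    {p : ℕ | p.Prime ∧ (p : A) ∈ P}.Subsingleton := by
  rintro p ⟨hp, hpP⟩ q ⟨hq, hqP⟩
  by_contra hne
  obtain ⟨u, v, huv⟩ :=
    (Nat.isCoprime_iff_coprime.mpr ((Nat.coprime_primes hp hq).mpr hne)).map (Int.castRingHom A)
  simp only [eq_intCast, Int.cast_natCast] at huv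
  exact hP (P.eq_top_of_isUnit_mem (huv ▸ P.add_mem (P.mul_mem_left u hpP) (P.mul_mem_left v hqP))
    isUnit_one)

lemma finite_setOf_prime_not_isSMulRegular [IsNoetherianRing A] [Module.Finite A M] :
    {p : ℕ | p.Prime ∧ ¬ IsSMulRegular M (p : A)}.Finite := by
  refine ((associatedPrimes.finite A M).biUnion fun P hP =>
    (setOf_prime_natCast_mem_subsingleton hP.isPrime.ne_top).finite).subset ?_
  rintro p ⟨hp, hreg⟩
  have hzd : (p : A) ∈ ⋃ P ∈ associatedPrimes A M, (P : Set A) :=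
    (biUnion_associatedPrimes_eq_compl_regular A M).symm ▸ hreg
  obtain ⟨P, hP, hpP⟩ := Set.mem_iUnion₂.mp hzd
  exact Set.mem_biUnion hP ⟨hp, hpP⟩

theorem map_mkQ_eq_Gamma_sup {𝔭 : Ideal A} {N : Submodule A M} (hN : N ≤ Gamma 𝔭 (N := M))
    {f r : A} (hf : f ∈ 𝔭) (hreg : IsSMulRegular (QuotSMulTop r (M ⧸ N)) f) :
    N.map (r • ⊤ : Submodule A M).mkQ = Gamma (Ideal.span {r} ⊔ 𝔭) (N := QuotSMulTop r M) := by
  refine le_antisymm ?_ fun z hz => ?_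
  · rintro _ ⟨x, hx, rfl⟩
    refine mem_Gamma_sup (mem_Gamma_span_singleton_of_smul_eq_zero ?_) (map_mem_Gamma _ (hN hx))
    rw [mkQ_apply, ← Quotient.mk_smul, Quotient.mk_eq_zero]
    exact mem_smul_top_iff_exists.mpr ⟨x, rfl⟩
  obtain ⟨z, rfl⟩ := mkQ_surjective _ z
  obtain ⟨k, hk⟩ := hz
  have hfk : f ^ k • z ∈ r • (⊤ : Submodule A M) := by
    rw [← Quotient.mk_eq_zero, Quotient.mk_smul]
    exact hk _ (Ideal.pow_mem_pow (Ideal.mem_sup_right hf) k)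
  obtain ⟨u, hu⟩ := mem_smul_top_iff_exists.mp hfk
  have hz : N.mkQ z ∈ r • (⊤ : Submodule A (M ⧸ N)) := by
    refine mem_of_isSMulRegular_quotient_of_smul_mem (hreg.pow k) ?_
    rw [← map_smul, ← hu, map_smul]
    exact mem_smul_top_iff_exists.mpr ⟨_, rfl⟩
  obtain ⟨y, hy⟩ := mem_smul_top_iff_exists.mp hz
  obtain ⟨y, rfl⟩ := N.mkQ_surjective y
  refine ⟨z - r • y, ?_, (Submodule.Quotient.eq _).mpr ?_⟩
  · rw [SetLike.mem_coe, ← Submodule.Quotient.mk_eq_zero, Quotient.mk_sub, Quotient.mk_smul]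
    exact sub_eq_zero.mpr hy.symm
  · rw [sub_sub_cancel_left]
    exact neg_mem (mem_smul_top_iff_exists.mpr ⟨y, rfl⟩)

end Regular

section Rint

variable {n : ℕ} {M : Type} [AddCommGroup M] [Module (Rint n) M] {𝔭 : Ideal (Rint n)} {p : ℕ}

lemma pSM_eq_smul_top (N : Type*) [AddCommGroup N] [Module (Rint n) N] :
    pSM n p N = (p : Rint n) • ⊤ :=
  ideal_span_singleton_smul _ _

lemma gammaModP_injective (hp : IsSMulRegular (M ⧸ Gamma 𝔭 (N := M)) (p : Rint n)) :
    Function.Injective (gammaModP n p M 𝔭) := by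
  refine (injective_iff_map_eq_zero _).mpr fun ξ hξ => ?_
  obtain ⟨x, rfl⟩ := mkQ_surjective _ ξ
  rw [gammaModP, mkQ_apply, mapQ_apply, Quotient.mk_eq_zero, pSM_eq_smul_top] at hξ
  rw [mkQ_apply, Submodule.Quotient.mk_eq_zero, mem_smul_top_iff, ideal_span_singleton_smul]
  exact smul_top_inf_eq_smul_of_isSMulRegular_on_quot hp ⟨hξ, x.2⟩

lemma range_gammaModP :
    LinearMap.range (gammaModP n p M 𝔭) = (Gamma 𝔭 (N := M)).map (pSM n p M).mkQ := by
  rw [gammaModP, mapQ, range_liftQ, LinearMap.range_comp, range_subtype]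

end Rint

lemma finite_setOf_prime_not_gammaModP_injective_and_range_eq {n : ℕ} (M : Type)
    [AddCommGroup M] [Module (Rint n) M] [Module.Finite (Rint n) M] (𝔭 : Ideal (Rint n)) :
    {p : ℕ | p.Prime ∧ ¬ (Function.Injective (gammaModP n p M 𝔭) ∧
      LinearMap.range (gammaModP n p M 𝔭) =
        Gamma (Ideal.span {(p : Rint n)} ⊔ 𝔭) (N := M ⧸ pSM n p M))}.Finite := by
  set Q := M ⧸ Gamma 𝔭 (N := M)
  obtain ⟨f, hf𝔭, hf⟩ :=
    exists_mem_isSMulRegular_of_Gamma_eq_bot (Gamma_quotient_Gamma_eq_bot (M := M) 𝔭)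
  refine ((finite_setOf_prime_not_isSMulRegular (A := Rint n) (M := Q)).union
    (finite_setOf_prime_not_isSMulRegular (A := Rint n) (M := QuotSMulTop f Q))).subset ?_
  rintro p ⟨hp, hbad⟩
  by_contra hgood
  simp only [Set.mem_union, Set.mem_ofPred_eq, hp, true_and, not_or, not_not] at hgood
  refine hbad ⟨gammaModP_injective hgood.1, ?_⟩
  rw [range_gammaModP, pSM_eq_smul_top]
  exact map_mkQ_eq_Gamma_sup le_rfl hf𝔭 (hf.quotSMulTop_swap hgood.2)

/-- Let `M` be a finitely generated module over `R = ℤ[x₁,…,xₙ]`. For all but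
finitely many prime integers `p`: for every associated prime `𝔭` of `M`, the natural map
`Γ_𝔭(M)/pΓ_𝔭(M) → M/pM` is injective with image `Γ_{pR+𝔭}(M/pM)`; in particular
`Γ_𝔭(M)/pΓ_𝔭(M) ≅ Γ_{pR+𝔭}(M̄)`. -/
theorem stmt_6 (n : ℕ) (M : Type) [AddCommGroup M] [Module (Rint n) M]
    [Module.Finite (Rint n) M] :
    {p : ℕ | p.Prime ∧
      ¬ (∀ 𝔭 ∈ associatedPrimes (Rint n) M,
          Function.Injective (gammaModP n p M 𝔭) ∧
          LinearMap.range (gammaModP n p M 𝔭) =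
            Gamma (Ideal.span {(p : Rint n)} ⊔ 𝔭) (N := M ⧸ pSM n p M))}.Finite := by
  refine ((associatedPrimes.finite (Rint n) M).biUnion
    fun 𝔭 _ => finite_setOf_prime_not_gammaModP_injective_and_range_eq M 𝔭).subset ?_
  rintro p ⟨hp, hbad⟩
  simp only [not_forall] at hbad
  obtain ⟨𝔭, h𝔭, hfail⟩ := hbad
  exact Set.mem_biUnion h𝔭 ⟨hp, hfail⟩
end
end

section
/- Let p be a prime integer, j ≥ 1, and set q = p^j. Let f, m ∈ R̄ = (ℤ/pℤ)[x₁,…,xₙ] be nonzero polynomials of total degrees d and D respectively, and let (i₁,…,iₙ) be a multi-index with 0 ≤ i_s ≤ q − 1 for every s. Write x₁^{i₁}⋯xₙ^{iₙ}·f^{q−1}·m = Σ_ā x₁^{a₁}⋯xₙ^{aₙ}·(g_ā)^{q}, the unique decomposition with multi-indices ā satisfying 0 ≤ a_s ≤ q − 1 and g_ā ∈ R̄. Then the top component g_{\overline{q−1}} (corresponding to ā = (q−1,…,q−1)) is either zero or has total degree at most max{D, d}. -/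
noncomputable section

/-- The top multi-index `(q−1,…,q−1)`, `q = p^j`. -/
def topIdx (p n j : ℕ) [Fact p.Prime] : Fin n → Fin (p ^ j) :=
  fun _ => ⟨p ^ j - 1, Nat.sub_lt (pow_pos (Fact.out : p.Prime).pos j) one_pos⟩

/-! Raising to the power `q = p ^ j` is `expand q` followed by the coefficientwise Frobenius, so
the coefficient of `x ^ (a + q • μ)`, with all `a s < q`, in `∑ b, x ^ b * g b ^ q` is
`(coeff μ (g a)) ^ q`. For `μ` of maximal degree in `g top ≠ 0` this exhibits a nonzero
coefficient of the left-hand side in degree `n (q - 1) + q · deg (g top)`, while the left-hand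
side has degree at most `n (q - 1) + (q - 1) d + D ≤ n (q - 1) + q · max D d`. -/

open MvPolynomial Finsupp

namespace MvPolynomial

variable {σ R : Type*} [CommSemiring R] (p : ℕ) [ExpChar R p] (j : ℕ)

theorem coeff_pow_expChar_pow_smul (h : MvPolynomial σ R) (μ : σ →₀ ℕ) :
    coeff (p ^ j • μ) (h ^ p ^ j) = coeff μ h ^ p ^ j := by
  rw [← map_iterateFrobenius_expand, coeff_map,
    coeff_expand_smul _ (expChar_pow_pos R p j).ne', iterateFrobenius_def]

theorem coeff_pow_expChar_pow_of_not_dvd (h : MvPolynomial σ R) {ν : σ →₀ ℕ} {s : σ}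
    (hs : ¬ p ^ j ∣ ν s) : coeff ν (h ^ p ^ j) = 0 := by
  rw [← map_iterateFrobenius_expand, coeff_map, coeff_expand_of_not_dvd _ hs, map_zero]

theorem coeff_add_smul_monomial_mul_pow_expChar_pow [DecidableEq σ] {a b : σ →₀ ℕ}
    (ha : ∀ s, a s < p ^ j) (hb : ∀ s, b s < p ^ j) (μ : σ →₀ ℕ)
    (h : MvPolynomial σ R) :
    coeff (a + p ^ j • μ) (monomial b 1 * h ^ p ^ j) =
      if b = a then coeff μ h ^ p ^ j else 0 := by
  rw [coeff_monomial_mul', one_mul]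
  split_ifs with hle hba hba
  · rw [hba, add_tsub_cancel_left, coeff_pow_expChar_pow_smul]
  · obtain ⟨s, hs⟩ : ∃ s, b s ≠ a s := by simpa [Finsupp.ext_iff] using hba
    refine coeff_pow_expChar_pow_of_not_dvd p j h (s := s) fun ⟨k, hk⟩ => hs ?_
    have hsum : b s + p ^ j * k = a s + p ^ j * μ s := by
      have := hle s
      simp only [tsub_apply, Finsupp.add_apply, Finsupp.smul_apply, smul_eq_mul] at hk this
      omega
    refine Nat.ModEq.eq_of_lt_of_lt ?_ (hb s) (ha s)
    simpa [Nat.ModEq] using congrArg (· % p ^ j) hsum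
  · exact absurd (hba ▸ le_self_add) hle
  · rfl

variable [Fintype σ]

theorem prod_X_pow_eq_monomial_equivFunOnFinite (a : σ → ℕ) :
    ∏ s, X s ^ a s = monomial (equivFunOnFinite.symm a) (1 : R) := by
  rw [monomial_eq, C_1, one_mul, Finsupp.prod_fintype _ _ (by simp)]
  rfl

theorem coeff_sum_prod_X_pow_mul_pow_expChar_pow [DecidableEq σ]
    (g : (σ → Fin (p ^ j)) → MvPolynomial σ R) (a : σ → Fin (p ^ j)) (μ : σ →₀ ℕ) :
    coeff (equivFunOnFinite.symm (fun s => (a s : ℕ)) + p ^ j • μ)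
      (∑ b : σ → Fin (p ^ j), (∏ s, X s ^ (b s : ℕ)) * g b ^ p ^ j) =
      coeff μ (g a) ^ p ^ j := by
  have hdigits (b : σ → Fin (p ^ j)) (s : σ) :
      equivFunOnFinite.symm (fun s => (b s : ℕ)) s < p ^ j :=
    (b s).isLt
  simp only [coeff_sum, prod_X_pow_eq_monomial_equivFunOnFinite,
    coeff_add_smul_monomial_mul_pow_expChar_pow p j (hdigits a) (hdigits _)]
  rw [Finset.sum_eq_single_of_mem a (Finset.mem_univ a), if_pos rfl]
  intro b _ hba
  rw [if_neg]
  intro h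
  apply hba
  ext s
  simpa using DFunLike.congr_fun h s

theorem sum_add_mul_totalDegree_le_totalDegree_sum [DecidableEq σ] [NoZeroDivisors R]
    {g : (σ → Fin (p ^ j)) → MvPolynomial σ R} {a : σ → Fin (p ^ j)} (ha : g a ≠ 0) :
    ∑ s, (a s : ℕ) + p ^ j * (g a).totalDegree ≤
      (∑ b : σ → Fin (p ^ j), (∏ s, X s ^ (b s : ℕ)) * g b ^ p ^ j).totalDegree := by
  obtain ⟨μ, hμ, hdeg⟩ := (g a).support.exists_mem_eq_sup (support_nonempty.mpr ha) degree
  have hcoeff := coeff_sum_prod_X_pow_mul_pow_expChar_pow p j g a μ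
  have hne : coeff (equivFunOnFinite.symm (fun s => (a s : ℕ)) + p ^ j • μ)
      (∑ b : σ → Fin (p ^ j), (∏ s, X s ^ (b s : ℕ)) * g b ^ p ^ j) ≠ 0 :=
    hcoeff ▸ pow_ne_zero _ (mem_support_iff.mp hμ)
  have htotal : (g a).totalDegree = degree μ := hdeg
  convert le_totalDegree (mem_support_iff.mpr hne) using 1
  change _ = degree _
  rw [map_add, map_nsmul, degree_eq_sum, htotal, smul_eq_mul]
  simp

theorem totalDegree_prod_X_pow_mul_le (i : σ → ℕ) (P : MvPolynomial σ R) :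
    ((∏ s, X s ^ i s) * P).totalDegree ≤ ∑ s, i s + P.totalDegree := by
  calc ((∏ s, X s ^ i s) * P).totalDegree
      ≤ (monomial (equivFunOnFinite.symm i) (1 : R)).totalDegree + P.totalDegree := by
        rw [prod_X_pow_eq_monomial_equivFunOnFinite]
        exact totalDegree_mul _ _
    _ ≤ ∑ s, i s + P.totalDegree := by
        grw [totalDegree_monomial_le]
        rw [sum_fintype _ _ fun _ => rfl]
        simp

end MvPolynomial

theorem stmt_14_general (p n j : ℕ) [Fact p.Prime]
    (f m : Rbar p n) (d D : ℕ)
    (hd : f.totalDegree = d) (hD : m.totalDegree = D)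
    (i : Fin n → Fin (p ^ j))
    (g : (Fin n → Fin (p ^ j)) → Rbar p n)
    (hg : (∏ s : Fin n, MvPolynomial.X s ^ (i s : ℕ)) * f ^ (p ^ j - 1) * m =
      ∑ a : Fin n → Fin (p ^ j),
        (∏ s : Fin n, MvPolynomial.X s ^ (a s : ℕ)) * g a ^ p ^ j) :
    g (topIdx p n j) = 0 ∨ (g (topIdx p n j)).totalDegree ≤ max D d := by
  refine or_iff_not_imp_left.mpr fun hne => ?_
  have hq : 0 < p ^ j := expChar_pow_pos (ZMod p) p j
  have lower := sum_add_mul_totalDegree_le_totalDegree_sum p j hne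
  rw [← hg, mul_assoc] at lower
  have upper : ((∏ s, X s ^ (i s : ℕ)) * (f ^ (p ^ j - 1) * m)).totalDegree ≤
      ∑ s, (i s : ℕ) + ((p ^ j - 1) * d + D) :=
    calc _ ≤ ∑ s, (i s : ℕ) + (f ^ (p ^ j - 1) * m).totalDegree :=
          totalDegree_prod_X_pow_mul_le _ _
      _ ≤ ∑ s, (i s : ℕ) + ((p ^ j - 1) * d + D) := by
        grw [totalDegree_mul, totalDegree_pow, hd, hD]
  have hi : ∑ s, (i s : ℕ) ≤ ∑ s, (topIdx p n j s : ℕ) :=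
    Finset.sum_le_sum fun s _ => Nat.le_sub_one_of_lt (i s).isLt
  refine Nat.le_of_mul_le_mul_left ?_ hq
  calc p ^ j * (g (topIdx p n j)).totalDegree ≤ (p ^ j - 1) * d + D := by omega
    _ ≤ (p ^ j - 1) * max D d + max D d := by gcongr <;> simp
    _ = p ^ j * max D d := by rw [← Nat.succ_mul, Nat.succ_eq_add_one, Nat.sub_add_cancel hq]

/-- **Statement 14.** Let `q = p^j`, let `f, m ∈ R̄` be nonzero of total degrees `d` and `D`,
and let `(i₁,…,iₙ)` be a multi-index with `0 ≤ i_s ≤ q−1`. Writing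
`x₁^{i₁}⋯xₙ^{iₙ}·f^{q−1}·m = Σ_ā x₁^{a₁}⋯xₙ^{aₙ}·(g_ā)^q` (the unique decomposition with
`0 ≤ a_s ≤ q−1`), the top component `g_{\overline{q−1}}` is either zero or has total degree
at most `max D d`. -/
theorem stmt_14 (p n j : ℕ) [Fact p.Prime] (hj : 1 ≤ j)
    (f m : Rbar p n) (hf : f ≠ 0) (hm : m ≠ 0) (d D : ℕ)
    (hd : f.totalDegree = d) (hD : m.totalDegree = D)
    (i : Fin n → Fin (p ^ j))
    (g : (Fin n → Fin (p ^ j)) → Rbar p n)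
    (hg : (∏ s : Fin n, MvPolynomial.X s ^ (i s : ℕ)) * f ^ (p ^ j - 1) * m =
      ∑ a : Fin n → Fin (p ^ j),
        (∏ s : Fin n, MvPolynomial.X s ^ (a s : ℕ)) * g a ^ p ^ j) :
    g (topIdx p n j) = 0 ∨ (g (topIdx p n j)).totalDegree ≤ max D d :=
  stmt_14_general p n j f m d D hd hD i g hg
end
end
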